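/- arXiv:1703.04904 — 2 statements merged into one kernel-verified Lean document; each statement's English description precedes it below -/
import Mathlib

section
/- Let Q be a group on which a group Γ acts by automorphisms, and let Q₁, Q₂ be Γ-stable subgroups of Q such that Q₁ normalizes Q₂. If the first (non-abelian) cohomology set H¹(Γ, Q₁ ∩ Q₂) is trivial, then the Γ-fixed points of the product satisfy (Q₁Q₂)^Γ = Q₁^Γ Q₂^Γ. -/
/-- Let `Γ` act on a group `Q` by automorphisms, and let `Q₁, Q₂` be
`Γ`-stable subgroups with `Q₁` normalizing `Q₂`.  If the first non-abelian cohomology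
`H¹(Γ, Q₁ ∩ Q₂)` is trivial (every crossed homomorphism with values in `Q₁ ⊓ Q₂` is a
coboundary `σ ↦ n⁻¹ · σ • n`), then `(Q₁Q₂)^Γ = Q₁^Γ · Q₂^Γ`; i.e. every `Γ`-fixed
element of `Q` of the form `q₁q₂` (`qᵢ ∈ Qᵢ`) is a product of a `Γ`-fixed element of
`Q₁` and a `Γ`-fixed element of `Q₂`. -/
theorem stmt0 {Γ Q : Type*} [Group Γ] [Group Q] [MulDistribMulAction Γ Q]
    (Q₁ Q₂ : Subgroup Q)
    (hQ₁ : ∀ (σ : Γ), ∀ q ∈ Q₁, σ • q ∈ Q₁)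
    (hQ₂ : ∀ (σ : Γ), ∀ q ∈ Q₂, σ • q ∈ Q₂)
    (hnorm : ∀ q₁ ∈ Q₁, ∀ q₂ ∈ Q₂, q₁ * q₂ * q₁⁻¹ ∈ Q₂)
    (hH1 : ∀ c : Γ → Q, (∀ σ, c σ ∈ Q₁ ⊓ Q₂) →
        (∀ σ τ, c (σ * τ) = c σ * σ • c τ) →
        ∃ n ∈ Q₁ ⊓ Q₂, ∀ σ, c σ = n⁻¹ * σ • n) :
    ∀ q : Q, (∀ σ : Γ, σ • q = q) → (∃ a ∈ Q₁, ∃ b ∈ Q₂, q = a * b) →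
      ∃ a ∈ Q₁, ∃ b ∈ Q₂, (∀ σ : Γ, σ • a = a) ∧ (∀ σ : Γ, σ • b = b) ∧ q = a * b := by
  rintro q hq ⟨a, ha, b, hb, rfl⟩
  -- the cocycle c σ = a⁻¹ * σ • a = b * (σ • b)⁻¹
  have key : ∀ σ : Γ, a⁻¹ * σ • a = b * (σ • b)⁻¹ := by
    intro σ
    have h := hq σ
    rw [smul_mul'] at h
    calc a⁻¹ * σ • a = a⁻¹ * (σ • a * σ • b) * (σ • b)⁻¹ := by group
      _ = a⁻¹ * (a * b) * (σ • b)⁻¹ := by rw [h]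
      _ = b * (σ • b)⁻¹ := by group
  obtain ⟨n, hn, hcn⟩ := hH1 (fun σ => a⁻¹ * σ • a)
    (by
      intro σ
      refine Subgroup.mem_inf.2 ⟨Q₁.mul_mem (Q₁.inv_mem ha) (hQ₁ σ a ha), ?_⟩
      show a⁻¹ * σ • a ∈ Q₂
      rw [key σ]
      exact Q₂.mul_mem hb (Q₂.inv_mem (hQ₂ σ b hb)))
    (by
      intro σ τ
      show a⁻¹ * (σ * τ) • a = (a⁻¹ * σ • a) * σ • (a⁻¹ * τ • a)
      rw [mul_smul, smul_mul', smul_inv']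
      group)
  have hsa : ∀ σ : Γ, σ • a = a * (n⁻¹ * σ • n) := by
    intro σ
    rw [← hcn σ]
    show σ • a = a * (a⁻¹ * σ • a)
    group
  refine ⟨a * n⁻¹, Q₁.mul_mem ha (Q₁.inv_mem hn.1), n * b, Q₂.mul_mem hn.2 hb, ?_, ?_, by group⟩
  · intro σ
    rw [smul_mul', smul_inv', hsa σ]
    group
  · intro σ
    have h := hq σ
    rw [smul_mul'] at h
    have hsb : σ • b = (σ • a)⁻¹ * (a * b) := by rw [← h]; group
    rw [smul_mul', hsb, hsa]
    group
end

section
/- Let Λ be an o_F-lattice sequence in a finite-dimensional F-vector space V over a non-archimedean local field F, with associated filtration 𝔞_t = {a ∈ End_F(V) : aΛ(j) ⊆ Λ(j+t)}. Let b ∈ 𝔞_{-n} and for each integer t let m_{t,n,b} : 𝔞_{-tn}/𝔞_{1-tn} → 𝔞_{-(t+1)n}/𝔞_{1-(t+1)n} be the map induced by left multiplication by b. If the minimal polynomial over the residue field of the class of π_F^{n/g}·b^{e/g} in 𝔞₀/𝔞₁ equals X (where e is the F-period of Λ and g = gcd(e, n)), and for every integer t the kernel of m_{t+1,n,b} intersects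 the image of m_{t,n,b} trivially, then the induced map m_{0,n,b} : 𝔞₀/𝔞₁ → 𝔞_{-n}/𝔞_{1-n} is the zero map, i.e. b ∈ 𝔞_{1-n}. -/
/-- The square-lattice filtration `𝔞_t(Λ)` of a lattice sequence `Λ`:
the set of `F`-endomorphisms `a` of `V` with `a (Λ j) ⊆ Λ (j + t)` for all `j`. -/
def aFilt {F V : Type*} [Field F] [AddCommGroup V] [Module F V]
    (Λ : ℤ → AddSubgroup V) (t : ℤ) : Set (Module.End F V) :=
  {a | ∀ i : ℤ, ∀ v ∈ Λ i, a v ∈ Λ (i + t)}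

lemma aFilt_congr {F V : Type*} [Field F] [AddCommGroup V] [Module F V]
    (Λ : ℤ → AddSubgroup V) {s t : ℤ} (h : s = t) : aFilt (F := F) Λ s = aFilt Λ t := by
  rw [h]

lemma aFilt_mul {F V : Type*} [Field F] [AddCommGroup V] [Module F V]
    (Λ : ℤ → AddSubgroup V) {s t : ℤ} {a c : Module.End F V}
    (ha : a ∈ aFilt Λ s) (hc : c ∈ aFilt Λ t) : a * c ∈ aFilt Λ (t + s) := by
  intro i v hv
  have h1 := hc i v hv
  have h2 := ha (i + t) _ h1
  simpa [add_assoc] using h2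

lemma aFilt_pow {F V : Type*} [Field F] [AddCommGroup V] [Module F V]
    (Λ : ℤ → AddSubgroup V) {n : ℤ} {b : Module.End F V}
    (hb : b ∈ aFilt Λ (-n)) : ∀ m : ℕ, b ^ m ∈ aFilt Λ (-(m * n))
  | 0 => by intro i v hv; simpa using hv
  | (m + 1) => by
    have h := aFilt_mul Λ hb (aFilt_pow Λ hb m)
    rw [← pow_succ'] at h
    have : -(↑m * n) + -n = -((↑m + 1) * n) := by ring
    rwa [this] at h

/-- Let `Λ` be an `o_F`-lattice sequence of `F`-period `e` in a
finite-dimensional `F`-vector space `V` (decreasing, `π_F`-periodic, `O`-stable where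
`O` is the valuation ring of `F` with uniformizer `π_F`), and let `b ∈ 𝔞_{-n}`.
If the minimal polynomial over the residue field of the class of
`π_F^{n/g} · b^{e/g}` in `𝔞₀/𝔞₁` equals `X` (i.e. that class is zero:
`π_F^{n/g} • b^{e/g} ∈ 𝔞₁`, where `g = gcd(e,n)`), and for every integer `t` the kernel
of `m_{t+1,n,b}` meets the image of `m_{t,n,b}` trivially (expressed on
representatives), then `m_{0,n,b}` is the zero map, i.e. `b ∈ 𝔞_{1-n}`. -/
theorem stmt3 {F V : Type*} [Field F] [AddCommGroup V] [Module F V]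
    [FiniteDimensional F V]
    (O : ValuationSubring F) (πF : O) (hπ : Irreducible πF)
    (e : ℕ) (he : 0 < e)
    (Λ : ℤ → AddSubgroup V)
    (hdec : ∀ i : ℤ, Λ (i + 1) ≤ Λ i)
    (hper : ∀ i : ℤ, Λ (i + (e : ℤ)) =
      (Λ i).map (DistribMulAction.toAddMonoidHom V (πF : F)))
    (hstab : ∀ c : O, ∀ i : ℤ, ∀ v ∈ Λ i, (c : F) • v ∈ Λ i)
    (n : ℕ) (hn : 0 < n)
    (b : Module.End F V) (hb : b ∈ aFilt Λ (-(n : ℤ)))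
    (hmin : ((πF : F) ^ (n / Nat.gcd e n)) • b ^ (e / Nat.gcd e n) ∈ aFilt Λ 1)
    (hker : ∀ t : ℤ, ∀ x ∈ aFilt Λ (-(t * n)),
        b * (b * x) ∈ aFilt Λ (1 - (t + 2) * n) →
        b * x ∈ aFilt Λ (1 - (t + 1) * n)) :
    b ∈ aFilt Λ (1 - (n : ℤ)) := by
  classical
  set g := Nat.gcd e n with hg
  have hgpos : 0 < g := Nat.gcd_pos_of_pos_left n he
  set e' := e / g with he'
  set n' := n / g with hn'
  have hπ0 : (πF : F) ≠ 0 := by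
    intro h
    exact hπ.ne_zero (Subtype.ext (by simpa using h))
  -- cancel one π
  have hcancel : ∀ (w : V) (j : ℤ), (πF : F) • w ∈ Λ (j + (e : ℤ)) → w ∈ Λ j := by
    intro w j hw
    rw [hper j] at hw
    rcases hw with ⟨u, hu, huw⟩
    have : u = w := by
      apply smul_right_injective V hπ0
      simpa using huw
    rwa [this] at hu
  -- cancel π^k
  have hcancelk : ∀ (k : ℕ) (w : V) (j : ℤ), (πF : F) ^ k • w ∈ Λ (j + (e : ℤ) * k) → w ∈ Λ j := by
    intro k
    induction k with
    | zero => intro w j hw; simpa using hw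
    | succ k ih =>
      intro w j hw
      have h1 : (πF : F) ^ k • ((πF : F) • w) ∈ Λ ((j + (e : ℤ)) + (e : ℤ) * k) := by
        rw [smul_smul, ← pow_succ]
        have : (j + (e : ℤ)) + (e : ℤ) * k = j + (e : ℤ) * (k + 1 : ℕ) := by push_cast; ring
        rwa [this]
      exact hcancel w j (ih _ _ h1)
  -- b^{e'} ∈ 𝔞_{1 - e' n}
  have hen : (e : ℤ) * n' = (e' : ℤ) * n := by
    have h1 : e * n' = e * n / g := (Nat.mul_div_assoc e (Nat.gcd_dvd_right e n)).symm
    have h2 : e' * n = e * n / g := by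
      rw [mul_comm (e / g) n, ← Nat.mul_div_assoc n (Nat.gcd_dvd_left e n), mul_comm n e]
    exact_mod_cast congrArg (Nat.cast : ℕ → ℤ) (h1.trans h2.symm)
  have hbe' : b ^ e' ∈ aFilt Λ (1 - (e' : ℤ) * n) := by
    intro i v hv
    have h1 := hmin i v hv
    have h2 : (πF : F) ^ n' • (b ^ e') v ∈ Λ (i + 1) := by
      simpa using h1
    have h3 : (b ^ e') v ∈ Λ (i + 1 - (e : ℤ) * n') := by
      apply hcancelk n' _ (i + 1 - (e : ℤ) * n')
      have : i + 1 - (e : ℤ) * n' + (e : ℤ) * n' = i + 1 := by ring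
      rwa [this]
    have heq : i + 1 - (e : ℤ) * n' = i + (1 - (e' : ℤ) * n) := by rw [hen]; ring
    rwa [heq] at h3
  -- downward induction
  have he'pos : 0 < e' := Nat.div_pos (Nat.gcd_le_left n he) hgpos
  have key : ∀ d : ℕ, ∀ k : ℕ, 1 ≤ k → k + d = e' → b ^ k ∈ aFilt Λ (1 - (k : ℤ) * n) := by
    intro d
    induction d with
    | zero =>
      intro k hk1 hke
      have hkeq : k = e' := by omega
      subst hkeq
      exact hbe'
    | succ d ih =>
      intro k hk1 hke
      have hk1' : b ^ (k + 1) ∈ aFilt Λ (1 - ((k : ℤ) + 1) * n) := by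
        have := ih (k + 1) (by omega) (by omega)
        rwa [Nat.cast_add, Nat.cast_one] at this
      obtain ⟨m, hm⟩ : ∃ m, k = m + 1 := ⟨k - 1, by omega⟩
      subst hm
      have hx : b ^ m ∈ aFilt Λ (-((m : ℤ) * n)) := aFilt_pow Λ hb m
      have hbb : b * (b * b ^ m) ∈ aFilt Λ (1 - ((m : ℤ) + 2) * n) := by
        have heq : b * (b * b ^ m) = b ^ (m + 1 + 1) := by rw [← pow_succ', ← pow_succ']
        rw [heq]
        have : (1 : ℤ) - ((↑(m + 1) : ℤ) + 1) * n = 1 - ((m : ℤ) + 2) * n := by push_cast; ring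
        rw [← this]
        exact hk1'
      have := hker (m : ℤ) (b ^ m) hx hbb
      have heq2 : b * b ^ m = b ^ (m + 1) := (pow_succ' b m).symm
      rw [heq2] at this
      have : b ^ (m + 1) ∈ aFilt Λ (1 - ((m : ℤ) + 1) * n) := this
      have hc : (1 : ℤ) - ((m : ℤ) + 1) * n = 1 - (↑(m + 1) : ℤ) * n := by push_cast; ring
      rwa [hc] at this
  have hfinal := key (e' - 1) 1 le_rfl (by omega)
  rw [pow_one] at hfinal
  have : (1 : ℤ) - ((1 : ℕ) : ℤ) * n = 1 - (n : ℤ) := by push_cast; ring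
  rwa [this] at hfinal
end
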